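/- Let N₁,…,N_m be positive integers. The Bernstein–Sato polynomial of the monomial z₁^{N₁}⋯z_m^{N_m} equals ∏_{i=1}^m ∏_{j=1}^{N_i} (s + j/N_i); moreover, all its roots are negative rational numbers lying in the set {−(k_i+1+ℓ)/N_i : ℓ ≥ 0} with k_i = 0. -/

import Mathlib

noncomputable section

namespace MeroBS

set_option linter.unusedSectionVars false

variable {k A B : Type*} [CommRing k] [CommRing A] [CommRing B]
  [Algebra k A] [Algebra A B] [Algebra k B] [IsScalarTower k A B]
  (S : Submonoid A) [IsLocalization S B]

def toDual (d : Derivation k A A) : A →+* DualNumber B where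
  toFun a := ⟨algebraMap A B a, algebraMap A B (d a)⟩
  map_one' := by ext <;> simp
  map_mul' a b := by
    ext
    · show algebraMap A B (a * b) = algebraMap A B a * algebraMap A B b
      simp
    · show algebraMap A B (d (a * b)) =
        algebraMap A B a • algebraMap A B (d b) + MulOpposite.op (algebraMap A B b) • algebraMap A B (d a)
      rw [d.leibniz]
      simp only [smul_eq_mul, map_add, map_mul, MulOpposite.smul_eq_mul_unop, MulOpposite.unop_op]
      ring
  map_zero' := by ext <;> simp
  map_add' a b := by
    ext
    · show algebraMap A B (a + b) = algebraMap A B a + algebraMap A B b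
      simp
    · show algebraMap A B (d (a + b)) = algebraMap A B (d a) + algebraMap A B (d b)
      simp

theorem toDual_isUnit (d : Derivation k A A) (s : S) : IsUnit (toDual (B := B) d s) := by
  rw [TrivSqZeroExt.isUnit_iff_isUnit_fst]
  exact IsLocalization.map_units B s

def dualLift (d : Derivation k A A) : B →+* DualNumber B :=
  IsLocalization.lift (M := S) (g := toDual (B := B) d) (fun s => toDual_isUnit S d s)

theorem dualLift_algebraMap (d : Derivation k A A) (a : A) :
    dualLift S d (algebraMap A B a) = toDual (B := B) d a :=
  IsLocalization.lift_eq _ _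

theorem dualLift_fst (d : Derivation k A A) (b : B) :
    (dualLift S d b).fst = b := by
  have h : (TrivSqZeroExt.fstHom B B B).toRingHom.comp (dualLift S d) = RingHom.id B := by
    apply IsLocalization.ringHom_ext S
    ext a
    simp [dualLift_algebraMap, toDual] <;> rfl
  exact congrArg (fun f => f b) (congrArg (fun f => f.toFun) h)

/-- Extension of a derivation to a localization. -/
def Derivation.extendLoc (d : Derivation k A A) : Derivation k B B where
  toLinearMap :=
    { toFun := fun b => (dualLift S d b).snd
      map_add' := fun x y => by simp
      map_smul' := fun c b => by
        show (dualLift S d (c • b)).snd = c • (dualLift S d b).snd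
        have h1 : (c • b) = algebraMap k B c * b := Algebra.smul_def c b
        have hc : dualLift S d (algebraMap k B c) = ⟨algebraMap k B c, 0⟩ := by
          rw [IsScalarTower.algebraMap_apply k A B, dualLift_algebraMap]
          ext
          · simp [toDual] <;> rfl
          · show algebraMap A B (d (algebraMap k A c)) = 0
            simp
        rw [h1, map_mul, TrivSqZeroExt.snd_mul, hc]
        simp [Algebra.smul_def] }
  map_one_eq_zero' := by simp
  leibniz' a b := by
    show (dualLift S d (a * b)).snd = _
    rw [map_mul, TrivSqZeroExt.snd_mul, dualLift_fst, dualLift_fst]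
    simp [smul_eq_mul, mul_comm]

theorem extendLoc_algebraMap (d : Derivation k A A) (a : A) :
    Derivation.extendLoc S d (algebraMap A B a) = algebraMap A B (d a) := by
  show (dualLift S d (algebraMap A B a)).snd = _
  rw [dualLift_algebraMap]
  rfl

/-- Coefficientwise extension of a derivation to the polynomial ring. -/
def Derivation.polyExt (d : Derivation k A A) : Derivation k (Polynomial A) (Polynomial A) :=
  PolynomialModule.equivPolynomialSelf.compDer d.mapCoeffs

end MeroBS

noncomputable section Framework

namespace MeroBS

variable {𝕂 R : Type*} [Field 𝕂] [CommRing R] [Algebra 𝕂 R]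

/-- The underlying module of `𝓜^α_{f/g}[s]`: the localization `R[s]_{fg}`. -/
abbrev Md (f g : R) : Type _ := Localization.Away (Polynomial.C (f * g))

variable (f g : R)

/-- The image of an element of `R` in `R[s]_{fg}`. -/
def elt (r : R) : Md f g := algebraMap (Polynomial R) (Md f g) (Polynomial.C r)

/-- The element `s`. -/
def sElt : Md f g := algebraMap (Polynomial R) (Md f g) Polynomial.X

/-- The inverse of `fg`. -/
def fgInv : Md f g := IsLocalization.Away.invSelf (S := Md f g) (Polynomial.C (f * g))

/-- The inverse of `f`. -/
def fInv : Md f g := elt f g g * fgInv f g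

/-- The inverse of `g`. -/
def gInv : Md f g := elt f g f * fgInv f g

/-- Extension of a derivation of `R` to `R[s]_{fg}`, with `d s = 0`. -/
def extD (d : Derivation 𝕂 R R) : Derivation 𝕂 (Md f g) (Md f g) :=
  Derivation.extendLoc (Submonoid.powers (Polynomial.C (f * g))) (Derivation.polyExt d)

/-- Multiplication operator. -/
def mulOp (c : Md f g) : Module.End 𝕂 (Md f g) := LinearMap.mulLeft 𝕂 c

variable (α : 𝕂)

/-- The twisted action of a derivation `∂` on `𝓜^α_{f/g}[s]`, encoding
`∂·(h (f^s/g^{s+α})) = (∂h + s h ∂f/f - (s+α) h ∂g/g)·(f^s/g^{s+α})`. -/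
def twist (d : Derivation 𝕂 R R) : Module.End 𝕂 (Md f g) :=
  (extD f g d).toLinearMap +
    mulOp f g (sElt f g * elt f g (d f) * fInv f g
      - (sElt f g + algebraMap 𝕂 (Md f g) α) * elt f g (d g) * gInv f g)

/-- The ring of differential operators `D_{R|𝕂}[s]` acting on `𝓜^α_{f/g}[s]`:
generated by multiplications by elements of `R`, multiplication by `s`, and the
twisted derivations. -/
def Dops : Subalgebra 𝕂 (Module.End 𝕂 (Md f g)) :=
  Algebra.adjoin 𝕂
    ((Set.range fun r : R => mulOp f g (elt f g r)) ∪ {mulOp f g (sElt f g)} ∪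
      Set.range (twist f g α))

/-- The functional equation `δ(s)·c·(f^s/g^{s+α}) = b(s)·(f^s/g^{s+α})` for the
module element `c·(f^s/g^{s+α})`. -/
def FunEqAt (c : Md f g) (b : Polynomial 𝕂) : Prop :=
  ∃ δ ∈ Dops f g α, δ c = Polynomial.aeval (sElt f g) b

/-- The Bernstein–Sato functional equation `δ(s)·f·(f^s/g^{s+α}) = b(s)·(f^s/g^{s+α})`. -/
def FunEq (b : Polynomial 𝕂) : Prop := FunEqAt f g α (elt f g f) b

/-- `b` is the Bernstein–Sato polynomial of order `α` of `f/g`: the monic polynomial of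
smallest degree satisfying the functional equation. -/
def IsBernsteinSato (b : Polynomial 𝕂) : Prop :=
  b.Monic ∧ FunEq f g α b ∧
    ∀ b' : Polynomial 𝕂, b' ≠ 0 → FunEq f g α b' → b.degree ≤ b'.degree

end MeroBS

end Framework

open MeroBS Polynomial Finset

noncomputable section BSMonoAux

namespace BSMono

open MeroBS Polynomial

set_option maxHeartbeats 1000000
set_option synthInstance.maxHeartbeats 400000

/-! ### Generic lemmas about the framework -/

section Generic

variable {𝕂 R : Type*} [Field 𝕂] [CommRing R] [Algebra 𝕂 R]

theorem fInv_mul_elt (f : R) : fInv f (1 : R) * elt f 1 f = 1 := by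
  have h1 : elt f (1 : R) (1 : R) = 1 := by simp [elt]
  have : (algebraMap (Polynomial R) (Md f (1:R))) (Polynomial.C (f * 1)) *
      IsLocalization.Away.invSelf (S := Md f (1:R)) (Polynomial.C (f * 1)) = 1 :=
    IsLocalization.Away.mul_invSelf _
  calc fInv f (1 : R) * elt f 1 f
      = fgInv f 1 * elt f 1 f := by rw [fInv, h1, one_mul]
    _ = 1 := by
        rw [fgInv, elt]
        rw [mul_comm] at this
        simpa using this

theorem polyExt_monomial (d : Derivation 𝕂 R R) (n : ℕ) (r : R) :
    Derivation.polyExt d (Polynomial.monomial n r) = Polynomial.monomial n (d r) := by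
  simp [Derivation.polyExt]

theorem polyExt_mapC_mul_C (d : Derivation 𝕂 R R) (q : Polynomial 𝕂) (r : R) :
    Derivation.polyExt d (q.map (algebraMap 𝕂 R) * Polynomial.C r)
      = q.map (algebraMap 𝕂 R) * Polynomial.C (d r) := by
  induction q using Polynomial.induction_on' with
  | add p q hp hq => simp [add_mul, hp, hq]
  | monomial n c =>
      rw [Polynomial.map_monomial]
      rw [show (Polynomial.monomial n) (algebraMap 𝕂 R c) * Polynomial.C r
            = Polynomial.monomial n (algebraMap 𝕂 R c * r) by
        rw [mul_comm, Polynomial.C_mul_monomial, mul_comm]]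
      rw [show (Polynomial.monomial n) (algebraMap 𝕂 R c) * Polynomial.C (d r)
            = Polynomial.monomial n (algebraMap 𝕂 R c * d r) by
        rw [mul_comm, Polynomial.C_mul_monomial, mul_comm]]
      rw [polyExt_monomial]
      congr 1
      rw [Derivation.leibniz]
      simp

theorem extD_algebraMap' (f : R) (d : Derivation 𝕂 R R) (a : Polynomial R) :
    extD f (1 : R) d (algebraMap (Polynomial R) (Md f (1:R)) a)
      = algebraMap (Polynomial R) (Md f (1:R)) (Derivation.polyExt d a) :=
  extendLoc_algebraMap _ _ _

theorem mulOp_apply (f g : R) (c v : Md f g) : mulOp (𝕂 := 𝕂) f g c v = c * v := rfl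

theorem twist_apply_g1 (f : R) (d : Derivation 𝕂 R R) (v : Md f (1:R)) :
    twist f (1 : R) (0 : 𝕂) d v
      = extD f 1 d v + sElt f 1 * elt f 1 (d f) * fInv f 1 * v := by
  have h0 : elt f (1 : R) (0 : R) = 0 := by simp [elt]
  simp [twist, mulOp, h0, LinearMap.mulLeft_apply]
  ring

end Generic

/-! ### The monomial setting -/

section Monomial

variable {m : ℕ}

abbrev Rm (m : ℕ) := MvPolynomial (Fin m) ℂ

def fN (N : Fin m → ℕ) : Rm m := ∏ i, MvPolynomial.X i ^ N i

def faN (N : Fin m → ℕ) : Fin m →₀ ℕ := Finsupp.equivFunOnFinite.symm N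

@[simp] lemma faN_apply (N : Fin m → ℕ) (i : Fin m) : faN N i = N i := rfl

lemma fN_eq_monomial (N : Fin m → ℕ) : fN N = MvPolynomial.monomial (faN N) 1 := by
  rw [MvPolynomial.monomial_eq, map_one, one_mul, fN]
  rw [Finsupp.prod_fintype]
  · rfl
  · intro i; exact pow_zero _

variable (N : Fin m → ℕ)

/-- The element `q(s)·z^u·(f^s)` of the module. -/
def U (q : Polynomial ℂ) (u : Fin m →₀ ℕ) : Md (fN N) (1 : Rm m) :=
  algebraMap (Polynomial (Rm m)) _
    (q.map (algebraMap ℂ (Rm m)) * Polynomial.C (MvPolynomial.monomial u 1))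

lemma U_add (q₁ q₂ : Polynomial ℂ) (u : Fin m →₀ ℕ) :
    U N q₁ u + U N q₂ u = U N (q₁ + q₂) u := by
  rw [U, U, U, Polynomial.map_add, add_mul, map_add]

lemma U_smul (c : ℂ) (q : Polynomial ℂ) (u : Fin m →₀ ℕ) :
    c • U N q u = U N (Polynomial.C c * q) u := by
  rw [U, U, Algebra.smul_def, IsScalarTower.algebraMap_apply ℂ (Polynomial (Rm m)) _,
    ← map_mul]
  congr 1
  rw [Polynomial.map_mul, Polynomial.map_C]
  rw [show algebraMap ℂ (Polynomial (Rm m)) c = Polynomial.C (algebraMap ℂ (Rm m) c) from rfl]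
  ring

lemma elt_f_eq_U : elt (fN N) 1 (fN N) = U N 1 (faN N) := by
  rw [elt, U, Polynomial.map_one, one_mul, fN_eq_monomial]

lemma aeval_sElt_eq_U (b : Polynomial ℂ) :
    Polynomial.aeval (sElt (fN N) (1 : Rm m)) b = U N b 0 := by
  induction b using Polynomial.induction_on' with
  | add p q hp hq => rw [map_add, hp, hq, U_add]
  | monomial n c =>
      rw [Polynomial.aeval_monomial, U, Polynomial.map_monomial, MvPolynomial.monomial_zero']
      simp only [map_one, Polynomial.C_1, mul_one]
      have hc : algebraMap ℂ (Md (fN N) (1 : Rm m)) c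
          = algebraMap (Polynomial (Rm m)) _ (Polynomial.C (algebraMap ℂ (Rm m) c)) := by
        rw [IsScalarTower.algebraMap_apply ℂ (Polynomial (Rm m)) (Md (fN N) (1 : Rm m))]
        rfl
      rw [← Polynomial.C_mul_X_pow_eq_monomial]
      simp only [map_mul, map_pow]
      exact congrArg (fun t => t * sElt (fN N) (1 : Rm m) ^ n) hc

lemma key_mono (i : Fin m) (u : Fin m →₀ ℕ) (hu : 1 ≤ u i) (hNi : 1 ≤ N i) :
    MvPolynomial.pderiv i (fN N) * MvPolynomial.monomial u (1 : ℂ)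
      = fN N * MvPolynomial.monomial (u - Finsupp.single i 1) ((N i : ℂ)) := by
  rw [fN_eq_monomial, MvPolynomial.pderiv_monomial, MvPolynomial.monomial_mul,
    MvPolynomial.monomial_mul]
  have he : faN N - Finsupp.single i 1 + u = faN N + (u - Finsupp.single i 1) := by
    ext j
    by_cases h : i = j
    · subst h
      simp only [Finsupp.add_apply, Finsupp.tsub_apply, faN_apply, Finsupp.single_eq_same]
      omega
    · simp only [Finsupp.add_apply, Finsupp.tsub_apply, faN_apply, Finsupp.single_eq_of_ne' h]
      omega
  rw [he]
  congr 1
  simp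

lemma twist_pderiv_U (i : Fin m) (q : Polynomial ℂ) (u : Fin m →₀ ℕ)
    (hu : 1 ≤ u i) (hNi : 1 ≤ N i) :
    twist (fN N) 1 (0 : ℂ) (MvPolynomial.pderiv i) (U N q u)
      = U N ((Polynomial.C ((u i : ℂ)) + (N i : Polynomial ℂ) * Polynomial.X) * q)
          (u - Finsupp.single i 1) := by
  rw [twist_apply_g1]
  have e1 : Polynomial.map (algebraMap ℂ (Rm m)) ((N i : Polynomial ℂ) * q)
      = (N i : Polynomial (Rm m)) * Polynomial.map (algebraMap ℂ (Rm m)) q := by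
    rw [Polynomial.map_mul, Polynomial.map_natCast]
  have e2 : (MvPolynomial.monomial (u - Finsupp.single i 1)) ((N i : ℂ))
      = (N i : Rm m) * MvPolynomial.monomial (u - Finsupp.single i 1) (1 : ℂ) := by
    rw [show ((N i : Rm m)) = MvPolynomial.C ((N i : ℂ)) from
      (map_natCast (MvPolynomial.C : ℂ →+* Rm m) (N i)).symm,
      MvPolynomial.C_mul_monomial, mul_one]
  have e3 : Polynomial.C ((N i : Rm m)) = ((N i : Polynomial (Rm m))) := by
    simp
  have h1 : extD (fN N) 1 (MvPolynomial.pderiv i) (U N q u)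
      = U N (Polynomial.C ((u i : ℂ)) * q) (u - Finsupp.single i 1) := by
    rw [U, extD_algebraMap', polyExt_mapC_mul_C, MvPolynomial.pderiv_monomial, one_mul]
    rw [U]
    refine congrArg _ ?_
    rw [Polynomial.map_mul, Polynomial.map_C]
    rw [show (MvPolynomial.monomial (u - Finsupp.single i 1)) ((u i : ℂ))
          = MvPolynomial.C ((u i : ℂ)) * MvPolynomial.monomial (u - Finsupp.single i 1) (1:ℂ) by
      rw [MvPolynomial.C_mul_monomial, mul_one], Polynomial.C_mul]
    rw [show algebraMap ℂ (Rm m) ((u i : ℂ)) = MvPolynomial.C ((u i : ℂ)) from rfl]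
    ring
  have key : elt (fN N) 1 (MvPolynomial.pderiv i (fN N)) * U N q u
      = elt (fN N) 1 (fN N) * U N ((N i : Polynomial ℂ) * q) (u - Finsupp.single i 1) := by
    rw [elt, elt, U, U, ← map_mul, ← map_mul]
    refine congrArg _ ?_
    rw [show Polynomial.C (MvPolynomial.pderiv i (fN N)) *
          (Polynomial.map (algebraMap ℂ (Rm m)) q * Polynomial.C (MvPolynomial.monomial u 1))
        = Polynomial.map (algebraMap ℂ (Rm m)) q *
            Polynomial.C (MvPolynomial.pderiv i (fN N) * MvPolynomial.monomial u 1) by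
      rw [Polynomial.C_mul]; ring]
    rw [key_mono N i u hu hNi, e2, Polynomial.C_mul, Polynomial.C_mul, e3, e1]
    ring
  have e4 : Polynomial.map (algebraMap ℂ (Rm m)) ((N i : Polynomial ℂ) * Polynomial.X * q)
      = (N i : Polynomial (Rm m)) * Polynomial.X * Polynomial.map (algebraMap ℂ (Rm m)) q := by
    rw [Polynomial.map_mul, Polynomial.map_mul, Polynomial.map_natCast, Polynomial.map_X]
  have h2 : sElt (fN N) 1 * elt (fN N) 1 (MvPolynomial.pderiv i (fN N)) * fInv (fN N) 1
        * U N q u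
      = U N ((N i : Polynomial ℂ) * Polynomial.X * q) (u - Finsupp.single i 1) := by
    have hcomm : sElt (fN N) 1 * elt (fN N) 1 (MvPolynomial.pderiv i (fN N)) * fInv (fN N) 1
          * U N q u
        = sElt (fN N) 1 * fInv (fN N) 1 *
            (elt (fN N) 1 (MvPolynomial.pderiv i (fN N)) * U N q u) := by ring
    rw [hcomm, key]
    have hcomm2 : sElt (fN N) 1 * fInv (fN N) 1 *
          (elt (fN N) 1 (fN N) * U N ((N i : Polynomial ℂ) * q) (u - Finsupp.single i 1))
        = sElt (fN N) 1 * (fInv (fN N) 1 * elt (fN N) 1 (fN N)) *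
            U N ((N i : Polynomial ℂ) * q) (u - Finsupp.single i 1) := by ring
    rw [hcomm2, fInv_mul_elt]
    simp only [mul_one]
    have hs : sElt (fN N) (1 : Rm m)
        = algebraMap (Polynomial (Rm m)) (Md (fN N) (1 : Rm m)) Polynomial.X := rfl
    rw [hs, U, U, ← map_mul]
    refine congrArg _ ?_
    rw [e4, e1]
    ring
  rw [h1, h2, U_add]
  congr 1
  ring

lemma twist_pow_U (i : Fin m) (hNi : 1 ≤ N i) (n : ℕ) (q : Polynomial ℂ) (u : Fin m →₀ ℕ)
    (h : n ≤ u i) :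
    ((twist (fN N) 1 (0 : ℂ) (MvPolynomial.pderiv i)) ^ n) (U N q u)
      = U N ((∏ j ∈ Finset.range n,
          (Polynomial.C (((u i - j : ℕ) : ℂ)) + (N i : Polynomial ℂ) * Polynomial.X)) * q)
          (u - Finsupp.single i n) := by
  induction n with
  | zero => simp
  | succ n ih =>
      rw [pow_succ', Module.End.mul_apply, ih (le_of_lt (Nat.lt_of_lt_of_le (Nat.lt_succ_self n) h))]
      have hui : 1 ≤ (u - Finsupp.single i n) i := by
        rw [Finsupp.tsub_apply, Finsupp.single_eq_same]; omega
      rw [twist_pderiv_U N i _ _ hui hNi]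
      have hexp : u - Finsupp.single i n - Finsupp.single i 1 = u - Finsupp.single i (n + 1) := by
        ext j
        by_cases hij : i = j
        · subst hij
          simp only [Finsupp.tsub_apply, Finsupp.single_eq_same]; omega
        · simp only [Finsupp.tsub_apply, Finsupp.single_eq_of_ne' hij]; omega
      have hcoef : ((u - Finsupp.single i n) i : ℂ) = (((u i - n : ℕ)) : ℂ) := by
        rw [Finsupp.tsub_apply, Finsupp.single_eq_same]
      rw [hexp, hcoef, Finset.prod_range_succ]
      congr 1
      ring

def TW (i : Fin m) : Module.End ℂ (Md (fN N) (1 : Rm m)) :=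
  (twist (fN N) 1 (0 : ℂ) (MvPolynomial.pderiv i)) ^ (N i)

def expOf (l : List (Fin m)) : Fin m →₀ ℕ := (l.map (fun i => Finsupp.single i (N i))).sum

def PPi (i : Fin m) : Polynomial ℂ :=
  ∏ j ∈ Finset.range (N i),
    (Polynomial.C (((N i - j : ℕ) : ℂ)) + (N i : Polynomial ℂ) * Polynomial.X)

lemma expOf_cons (i : Fin m) (l : List (Fin m)) :
    expOf N (i :: l) = Finsupp.single i (N i) + expOf N l := by
  simp [expOf]

lemma prod_TW (hN : ∀ i, 0 < N i) (l : List (Fin m)) (hl : l.Nodup) (q : Polynomial ℂ)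
    (w : Fin m →₀ ℕ) (hw : ∀ i ∈ l, w i = 0) :
    ((l.map (TW N)).prod) (U N q (expOf N l + w))
      = U N (((l.map (PPi N)).prod) * q) w := by
  induction l generalizing w with
  | nil =>
      simp only [List.map_nil, List.prod_nil, expOf, List.sum_nil, zero_add, one_mul]
      rfl
  | cons i l' ih =>
      have hi : w i = 0 := hw i (List.mem_cons_self)
      have hil' : i ∉ l' := (List.nodup_cons.mp hl).1
      have hw' : ∀ j ∈ l', (Finsupp.single i (N i) + w) j = 0 := by
        intro j hj
        have hij : i ≠ j := fun h => hil' (h ▸ hj)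
        rw [Finsupp.add_apply, Finsupp.single_eq_of_ne' hij, hw j (List.mem_cons_of_mem _ hj)]
      have hexp : expOf N (i :: l') + w = expOf N l' + (Finsupp.single i (N i) + w) := by
        rw [expOf_cons, add_assoc]
        exact add_left_comm _ _ _
      rw [List.map_cons, List.prod_cons, Module.End.mul_apply, hexp,
        ih (List.nodup_cons.mp hl).2 _ hw']
      have hwi : (Finsupp.single i (N i) + w) i = N i := by
        rw [Finsupp.add_apply, Finsupp.single_eq_same, hi, add_zero]
      rw [TW, twist_pow_U N i (hN i) (N i) _ _ (by rw [hwi])]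
      have hexp2 : Finsupp.single i (N i) + w - Finsupp.single i (N i) = w := by
        ext j
        by_cases hij : i = j
        · subst hij
          simp only [Finsupp.tsub_apply, Finsupp.add_apply, Finsupp.single_eq_same]; omega
        · simp only [Finsupp.tsub_apply, Finsupp.add_apply, Finsupp.single_eq_of_ne' hij]; omega
      rw [hexp2]
      congr 1
      simp only [hwi, List.map_cons, List.prod_cons, PPi]
      ring

def cN : ℂ := ∏ i, (N i : ℂ) ^ (N i)

lemma cN_ne_zero (hN : ∀ i, 0 < N i) : cN N ≠ 0 := by
  rw [cN, Finset.prod_ne_zero_iff]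
  intro i _
  exact pow_ne_zero _ (Nat.cast_ne_zero.mpr (hN i).ne')

def Bpoly : Polynomial ℂ :=
  ∏ i, ∏ j ∈ Finset.range (N i),
    (Polynomial.X + Polynomial.C (((j : ℂ) + 1) / (N i : ℂ)))

lemma range_prod_eq (hN : ∀ i, 0 < N i) (i : Fin m) :
    ∏ j ∈ Finset.range (N i),
        (Polynomial.C (((j + 1 : ℕ) : ℂ)) + (N i : Polynomial ℂ) * Polynomial.X)
      = Polynomial.C ((N i : ℂ) ^ (N i)) *
          ∏ j ∈ Finset.range (N i),
            (Polynomial.X + Polynomial.C (((j : ℂ) + 1) / (N i : ℂ))) := by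
  have hn0 : ((N i : ℂ)) ≠ 0 := Nat.cast_ne_zero.mpr (hN i).ne'
  have step2 : ∀ j ∈ Finset.range (N i),
      Polynomial.C (((j + 1 : ℕ) : ℂ)) + (N i : Polynomial ℂ) * Polynomial.X
        = Polynomial.C ((N i : ℂ)) *
            (Polynomial.X + Polynomial.C (((j : ℂ) + 1) / (N i : ℂ))) := by
    intro j _
    rw [mul_add, ← Polynomial.C_mul, mul_div_cancel₀ _ hn0]
    push_cast
    rw [Polynomial.C_eq_natCast]
    push_cast
    ring
  rw [Finset.prod_congr rfl step2, Finset.prod_mul_distrib, Finset.prod_const,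
    Finset.card_range, ← Polynomial.C_pow]

lemma PPi_eq (hN : ∀ i, 0 < N i) (i : Fin m) :
    PPi N i = Polynomial.C ((N i : ℂ) ^ (N i)) *
      ∏ j ∈ Finset.range (N i),
        (Polynomial.X + Polynomial.C (((j : ℂ) + 1) / (N i : ℂ))) := by
  have hn0 : ((N i : ℂ)) ≠ 0 := Nat.cast_ne_zero.mpr (hN i).ne'
  have step1 : PPi N i = ∏ j ∈ Finset.range (N i),
      (Polynomial.C (((j + 1 : ℕ) : ℂ)) + (N i : Polynomial ℂ) * Polynomial.X) := by
    rw [PPi, ← Finset.prod_range_reflect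
      (fun j => Polynomial.C (((j + 1 : ℕ) : ℂ)) + (N i : Polynomial ℂ) * Polynomial.X) (N i)]
    refine Finset.prod_congr rfl fun j hj => ?_
    rw [Finset.mem_range] at hj
    have hnat : N i - 1 - j + 1 = N i - j := by omega
    rw [hnat]
  rw [step1]
  exact range_prod_eq N hN i

lemma expOf_finRange : expOf N (List.finRange m) = faN N := by
  ext j
  rw [expOf]
  have : ((List.finRange m).map (fun i => Finsupp.single i (N i))).sum j
      = ((List.finRange m).map (fun i => Finsupp.single i (N i) j)).sum := by
    rw [← Finsupp.applyAddHom_apply, AddMonoidHom.map_list_sum, List.map_map]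
    rfl
  rw [this]
  have h2 : ((List.finRange m).map (fun i => Finsupp.single i (N i) j)).sum
      = ∑ i, Finsupp.single i (N i) j := by
    rw [Fin.sum_univ_def]
  rw [h2, faN_apply]
  simp [Finsupp.single_apply]

lemma list_prod_PPi : ((List.finRange m).map (PPi N)).prod = ∏ i, PPi N i := by
  rw [Fin.prod_univ_def]

theorem funEq_main (hN : ∀ i, 0 < N i) : FunEq (fN N) (1 : Rm m) (0 : ℂ) (Bpoly N) := by
  refine ⟨(cN N)⁻¹ • ((List.finRange m).map (TW N)).prod, ?_, ?_⟩
  · refine Subalgebra.smul_mem _ ?_ _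
    refine list_prod_mem ?_
    intro x hx
    rw [List.mem_map] at hx
    obtain ⟨i, _, rfl⟩ := hx
    refine pow_mem ?_ _
    refine Algebra.subset_adjoin ?_
    exact Or.inr ⟨MvPolynomial.pderiv i, rfl⟩
  · rw [LinearMap.smul_apply, elt_f_eq_U]
    have h0 : faN N = expOf N (List.finRange m) + 0 := by rw [expOf_finRange, add_zero]
    have hP : ∏ i, PPi N i = Polynomial.C (cN N) * Bpoly N := by
      rw [Finset.prod_congr rfl (fun i _ => PPi_eq N hN i), Finset.prod_mul_distrib, Bpoly, cN,
        ← map_prod]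
    have hq : Polynomial.C ((cN N)⁻¹) * (((List.finRange m).map (PPi N)).prod * 1)
        = Bpoly N := by
      rw [mul_one, list_prod_PPi, hP, ← mul_assoc, ← Polynomial.C_mul,
        inv_mul_cancel₀ (cN_ne_zero N hN), Polynomial.C_1, one_mul]
    rw [h0, prod_TW N hN (List.finRange m) (List.nodup_finRange m) 1 0 (fun i _ => rfl),
      U_smul, hq, aeval_sElt_eq_U]

end Monomial

/-! ### The Laurent model and minimality -/

section Minimality

variable {m : ℕ}

abbrev G (m : ℕ) := Fin m → ℤ

abbrev L (m : ℕ) := AddMonoidAlgebra (Polynomial ℂ) (G m)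

def ei (i : Fin m) : G m := Pi.single i 1

def castu (u : Fin m →₀ ℕ) : G m := fun i => (u i : ℤ)

variable (N : Fin m → ℕ)

def Nz : G m := fun i => (N i : ℤ)

lemma single_mul_single_inv (w : G m) :
    AddMonoidAlgebra.single w (1 : Polynomial ℂ) * AddMonoidAlgebra.single (-w) 1 = 1 := by
  rw [AddMonoidAlgebra.single_mul_single, add_neg_cancel, mul_one]
  rfl

def Phi0 : Rm m →+* L m :=
  MvPolynomial.eval₂Hom
    ((AddMonoidAlgebra.singleZeroRingHom).comp (Polynomial.C : ℂ →+* Polynomial ℂ))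
    (fun i => AddMonoidAlgebra.single (ei i) 1)

def Phi1 : Polynomial (Rm m) →+* L m :=
  Polynomial.eval₂RingHom (Phi0 (m := m)) (AddMonoidAlgebra.single 0 Polynomial.X)

lemma prod_single_one {ι : Type*} (s : Finset ι) (g : ι → G m) :
    (∏ i ∈ s, AddMonoidAlgebra.single (g i) (1 : Polynomial ℂ))
      = AddMonoidAlgebra.single (∑ i ∈ s, g i) 1 := by
  induction s using Finset.cons_induction with
  | empty => simp; rfl
  | cons i s his ih =>
      rw [Finset.prod_cons, Finset.sum_cons, ih, AddMonoidAlgebra.single_mul_single, one_mul]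

lemma Phi0_monomial (u : Fin m →₀ ℕ) (c : ℂ) :
    Phi0 (MvPolynomial.monomial u c)
      = AddMonoidAlgebra.single (castu u) (Polynomial.C c) := by
  rw [Phi0, MvPolynomial.eval₂Hom_monomial]
  have h1 : (Finsupp.prod u fun i k => AddMonoidAlgebra.single (ei i) (1 : Polynomial ℂ) ^ k)
      = AddMonoidAlgebra.single (castu u) 1 := by
    rw [Finsupp.prod_fintype _ _ (fun i => pow_zero _)]
    have h2 : ∀ i : Fin m, AddMonoidAlgebra.single (ei i) (1 : Polynomial ℂ) ^ (u i)
        = AddMonoidAlgebra.single ((u i : ℤ) • ei i) 1 := by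
      intro i
      rw [AddMonoidAlgebra.single_pow, one_pow]
      norm_num
    rw [Finset.prod_congr rfl (fun i _ => h2 i), prod_single_one]
    congr 1
    funext j
    rw [Finset.sum_apply]
    simp [ei, Pi.single_apply, castu]
  rw [h1]
  have h3 : (AddMonoidAlgebra.singleZeroRingHom.comp (Polynomial.C : ℂ →+* Polynomial ℂ)) c
      = AddMonoidAlgebra.single (0 : G m) (Polynomial.C c) := rfl
  rw [h3, AddMonoidAlgebra.single_mul_single, zero_add, mul_one]

lemma Phi0_support_nonneg (r : Rm m) : ∀ b ∈ (Phi0 (m := m) r).coeff.support, (0 : G m) ≤ b := by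
  induction r using MvPolynomial.induction_on' with
  | monomial u c =>
      intro b hb
      rw [Phi0_monomial, AddMonoidAlgebra.coeff_single] at hb
      have := Finsupp.support_single_subset hb
      rw [Finset.mem_singleton] at this
      subst this
      intro i
      exact Int.natCast_nonneg _
  | add p q hp hq =>
      intro b hb
      rw [map_add, AddMonoidAlgebra.coeff_add] at hb
      rcases Finset.mem_union.mp (Finsupp.support_add hb) with h | h
      · exact hp b h
      · exact hq b h

lemma Phi1_C (r : Rm m) : Phi1 (Polynomial.C r) = Phi0 r := by
  rw [Phi1, Polynomial.coe_eval₂RingHom, Polynomial.eval₂_C]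

lemma Phi1_X : Phi1 (Polynomial.X : Polynomial (Rm m))
    = AddMonoidAlgebra.single (0 : G m) Polynomial.X := by
  rw [Phi1, Polynomial.coe_eval₂RingHom, Polynomial.eval₂_X]

lemma Phi0_fN : Phi0 (fN N) = AddMonoidAlgebra.single (Nz N) 1 := by
  rw [fN_eq_monomial, Phi0_monomial, Polynomial.C_1]
  congr 1

lemma isUnit_PhiC : IsUnit (Phi1 (Polynomial.C (fN N * 1))) := by
  rw [mul_one, Phi1_C, Phi0_fN]
  exact IsUnit.of_mul_eq_one _ (single_mul_single_inv (Nz N))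

def Phi : Md (fN N) (1 : Rm m) →+* L m :=
  IsLocalization.Away.lift (Polynomial.C (fN N * 1)) (isUnit_PhiC N)

lemma Phi_algebraMap (a : Polynomial (Rm m)) :
    Phi N (algebraMap (Polynomial (Rm m)) (Md (fN N) (1 : Rm m)) a) = Phi1 a :=
  IsLocalization.Away.lift_eq _ _ _

lemma Phi_elt (r : Rm m) : Phi N (elt (fN N) 1 r) = Phi0 r := by
  rw [elt, Phi_algebraMap, Phi1_C]

lemma Phi_sElt : Phi N (sElt (fN N) 1) = AddMonoidAlgebra.single (0 : G m) Polynomial.X := by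
  rw [sElt, Phi_algebraMap, Phi1_X]

lemma Phi_fInv : Phi N (fInv (fN N) 1) = AddMonoidAlgebra.single (-(Nz N)) 1 := by
  have h := congrArg (Phi N) (fInv_mul_elt (fN N))
  rw [map_mul, map_one, Phi_elt, Phi0_fN] at h
  calc Phi N (fInv (fN N) 1)
      = Phi N (fInv (fN N) 1) *
          (AddMonoidAlgebra.single (Nz N) 1 * AddMonoidAlgebra.single (-(Nz N)) 1) := by
        rw [single_mul_single_inv]
        exact (mul_one _).symm
    _ = AddMonoidAlgebra.single (-(Nz N)) 1 := by rw [← mul_assoc, h, one_mul]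

lemma Phi_algebraMapC (c : ℂ) :
    Phi N (algebraMap ℂ (Md (fN N) (1 : Rm m)) c)
      = AddMonoidAlgebra.single (0 : G m) (Polynomial.C c) := by
  rw [IsScalarTower.algebraMap_apply ℂ (Polynomial (Rm m)) (Md (fN N) (1 : Rm m)), Phi_algebraMap]
  have : algebraMap ℂ (Polynomial (Rm m)) c = Polynomial.C (MvPolynomial.C c) := rfl
  rw [this, Phi1_C, ← MvPolynomial.monomial_zero', Phi0_monomial]
  congr 1

/-! ### Divisibility bookkeeping -/

def Dax (n : ℕ) (b a : ℤ) : Polynomial ℂ :=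
  ∏ j ∈ Finset.Ioc a b, (Polynomial.C ((j : ℂ)) + (n : Polynomial ℂ) * Polynomial.X)

def Dv (w w' : G m) : Polynomial ℂ := ∏ i, Dax (N i) (w i) (w' i)

def InM (w : G m) (x : L m) : Prop := ∀ w', Dv N w w' ∣ x.coeff w'

lemma Dax_dvd_of_le (n : ℕ) (b : ℤ) {a a' : ℤ} (h : a' ≤ a) : Dax n b a ∣ Dax n b a' :=
  Finset.prod_dvd_prod_of_subset _ _ _ (Finset.Ioc_subset_Ioc h le_rfl)

lemma Dv_dvd_of_le (w : G m) {a a' : G m} (h : ∀ i, a' i ≤ a i) : Dv N w a ∣ Dv N w a' :=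
  Finset.prod_dvd_prod_of_dvd _ _ (fun i _ => Dax_dvd_of_le _ _ (h i))

lemma InM_add {w : G m} {x y : L m} (hx : InM N w x) (hy : InM N w y) : InM N w (x + y) := by
  intro w'
  rw [AddMonoidAlgebra.coeff_add, Finsupp.add_apply]
  exact dvd_add (hx w') (hy w')

lemma InM_sum {w : G m} {ι : Type*} (s : Finset ι) (g : ι → L m)
    (h : ∀ i ∈ s, InM N w (g i)) : InM N w (∑ i ∈ s, g i) := by
  intro w'
  rw [AddMonoidAlgebra.coeff_sum, Finset.sum_apply']
  exact Finset.dvd_sum fun i hi => h i hi w'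

lemma InM_mul_nonneg {w : G m} (y x : L m) (hy : ∀ b ∈ y.coeff.support, (0 : G m) ≤ b)
    (hx : InM N w x) : InM N w (y * x) := by
  intro w'
  rw [AddMonoidAlgebra.coeff_mul]
  refine Finset.dvd_sum fun a1 ha1 => Finset.dvd_sum fun a2 ha2 => ?_
  dsimp only
  split_ifs with h
  · have hle : ∀ i, a2 i ≤ w' i := by
      intro i
      have h1 : (0 : ℤ) ≤ a1 i := hy a1 ha1 i
      have h2 : a1 i + a2 i = w' i := congrFun h i
      omega
    exact ((Dv_dvd_of_le N w hle).trans (hx a2)).mul_left _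
  · exact dvd_zero _

/-! ### The formal partial derivative on the Laurent model -/

def D' (i : Fin m) : L m →ₗ[Polynomial ℂ] L m :=
  (AddMonoidAlgebra.coeffLinearEquiv (R := Polynomial ℂ) (S := Polynomial ℂ) (M := G m)).symm.toLinearMap ∘ₗ
  (Finsupp.lsum (Polynomial ℂ) fun a =>
    (Finsupp.lsingle (a - ei i)).comp
      (LinearMap.lsmul (Polynomial ℂ) (Polynomial ℂ) (((a i : ℤ) : Polynomial ℂ)))) ∘ₗ
  (AddMonoidAlgebra.coeffLinearEquiv (R := Polynomial ℂ) (S := Polynomial ℂ) (M := G m)).toLinearMap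

lemma D'_single (i : Fin m) (a : G m) (p : Polynomial ℂ) :
    D' i (AddMonoidAlgebra.single a p)
      = AddMonoidAlgebra.single (a - ei i) (((a i : ℤ) : Polynomial ℂ) * p) := by
  exact congrArg AddMonoidAlgebra.ofCoeff <| Finsupp.lsum_single (S := Polynomial ℂ)
    (fun a : G m => (Finsupp.lsingle (a - ei i)).comp
      (LinearMap.lsmul (Polynomial ℂ) (Polynomial ℂ) (((a i : ℤ) : Polynomial ℂ)))) a p

lemma D'_apply_coeff (i : Fin m) (x : L m) (w' : G m) :
    (D' i x).coeff w' = (((w' i + 1 : ℤ)) : Polynomial ℂ) * x.coeff (w' + ei i) := by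
  induction x using AddMonoidAlgebra.induction_linear with
  | zero => simp
  | add p q hp hq => rw [map_add, AddMonoidAlgebra.coeff_add, Finsupp.add_apply, hp, hq,
      AddMonoidAlgebra.coeff_add, Finsupp.add_apply, mul_add]
  | single a p =>
      rw [D'_single, AddMonoidAlgebra.coeff_single, AddMonoidAlgebra.coeff_single]
      by_cases h : a = w' + ei i
      · subst h
        have h1 : w' + ei i - ei i = w' := by ring
        have h2 : (w' + ei i) i = w' i + 1 := by
          rw [Pi.add_apply, ei, Pi.single_eq_same]
        rw [h1, h2, Finsupp.single_eq_same, Finsupp.single_eq_same]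
      · have h1 : a - ei i ≠ w' := fun hc => h (by rw [← hc]; ring)
        rw [Finsupp.single_eq_of_ne' h1, Finsupp.single_eq_of_ne' h]
        rw [mul_zero]

lemma D'_leibniz (i : Fin m) (x y : L m) :
    D' i (x * y) = x * D' i y + y * D' i x := by
  induction x using AddMonoidAlgebra.induction_linear with
  | zero => simp
  | add p q hp hq => rw [add_mul, map_add, hp, hq, map_add]; ring
  | single a p =>
      induction y using AddMonoidAlgebra.induction_linear with
      | zero => simp
      | add p' q' hp' hq' => rw [mul_add, map_add, hp', hq', map_add]; ring
      | single b q =>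
          rw [AddMonoidAlgebra.single_mul_single, D'_single, D'_single, D'_single,
            AddMonoidAlgebra.single_mul_single, AddMonoidAlgebra.single_mul_single]
          have e1 : a + (b - ei i) = a + b - ei i := by ring
          have e2 : b + (a - ei i) = a + b - ei i := by ring
          rw [e1, e2, ← AddMonoidAlgebra.single_add]
          congr 1
          have e3 : (((a + b) i : ℤ) : Polynomial ℂ)
              = ((a i : ℤ) : Polynomial ℂ) + ((b i : ℤ) : Polynomial ℂ) := by
            rw [Pi.add_apply]
            push_cast
            ring
          rw [e3]
          ring

def Top (i : Fin m) (x : L m) : L m :=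
  D' i x + AddMonoidAlgebra.single (-(ei i)) ((N i : Polynomial ℂ) * Polynomial.X) * x

lemma Top_coeff (i : Fin m) (x : L m) (w' : G m) :
    (Top N i x).coeff w'
      = ((((w' i + 1 : ℤ)) : Polynomial ℂ) + (N i : Polynomial ℂ) * Polynomial.X)
          * x.coeff (w' + ei i) := by
  rw [Top, AddMonoidAlgebra.coeff_add, Finsupp.add_apply, D'_apply_coeff,
    AddMonoidAlgebra.coeff_single_mul_apply]
  have h1 : -(-(ei i)) + w' = w' + ei i := by ring
  rw [h1]
  ring

lemma Dax_step (n : ℕ) (b a : ℤ) :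
    Dax n b a ∣ ((((a + 1 : ℤ)) : Polynomial ℂ) + (n : Polynomial ℂ) * Polynomial.X)
      * Dax n b (a + 1) := by
  rcases le_or_gt (a + 1) b with h | h
  · have hins : Finset.Ioc a b = insert (a + 1) (Finset.Ioc (a + 1) b) := by
      ext k
      simp only [Finset.mem_Ioc, Finset.mem_insert]
      omega
    have hnot : (a + 1) ∉ Finset.Ioc (a + 1) b := by simp
    rw [Dax, hins, Finset.prod_insert hnot]
    have : Polynomial.C (((a + 1 : ℤ) : ℂ)) = (((a + 1 : ℤ)) : Polynomial ℂ) := by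
      rw [Polynomial.C_eq_intCast]
    rw [this, Dax]
  · have h1 : Finset.Ioc a b = ∅ := Finset.Ioc_eq_empty (by omega)
    have h2 : Finset.Ioc (a + 1) b = ∅ := Finset.Ioc_eq_empty (by omega)
    rw [Dax, Dax, h1, h2]
    simp

lemma Dv_step (i : Fin m) (w w' : G m) :
    Dv N w w' ∣ ((((w' i + 1 : ℤ)) : Polynomial ℂ) + (N i : Polynomial ℂ) * Polynomial.X)
      * Dv N w (w' + ei i) := by
  have hmem : i ∈ (Finset.univ : Finset (Fin m)) := Finset.mem_univ i
  rw [Dv, Dv, ← Finset.mul_prod_erase _ _ hmem, ← Finset.mul_prod_erase _ _ hmem]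
  have hsame : ∀ j ∈ Finset.univ.erase i,
      Dax (N j) (w j) ((w' + ei i) j) = Dax (N j) (w j) (w' j) := by
    intro j hj
    have hij : j ≠ i := Finset.ne_of_mem_erase hj
    congr 1
    rw [Pi.add_apply, ei, Pi.single_eq_of_ne hij, add_zero]
  rw [Finset.prod_congr rfl hsame]
  have hei : (w' + ei i) i = w' i + 1 := by rw [Pi.add_apply, ei, Pi.single_eq_same]
  rw [hei, ← mul_assoc]
  exact mul_dvd_mul (Dax_step (N i) (w i) (w' i)) dvd_rfl

lemma Top_InM {w : G m} (i : Fin m) (x : L m) (hx : InM N w x) : InM N w (Top N i x) := by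
  intro w'
  rw [Top_coeff]
  exact (Dv_step N i w w').trans (mul_dvd_mul_left _ (hx (w' + ei i)))

/-! ### Transfer of derivations through `Phi` -/

lemma transfer (Dm : Derivation ℂ (Md (fN N) (1 : Rm m)) (Md (fN N) (1 : Rm m)))
    (DL : L m → L m)
    (hadd : ∀ x y, DL (x + y) = DL x + DL y)
    (hleib : ∀ x y, DL (x * y) = x * DL y + y * DL x)
    (hbase : ∀ a : Polynomial (Rm m),
      Phi N (Dm (algebraMap (Polynomial (Rm m)) (Md (fN N) (1 : Rm m)) a)) = DL (Phi1 a))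
    (v : Md (fN N) (1 : Rm m)) :
    Phi N (Dm v) = DL (Phi N v) := by
  obtain ⟨⟨a, s⟩, hs⟩ := IsLocalization.surj (Submonoid.powers (Polynomial.C (fN N * 1))) v
  have h1 : Dm (v * algebraMap (Polynomial (Rm m)) (Md (fN N) (1 : Rm m)) (s : Polynomial (Rm m)))
      = Dm (algebraMap (Polynomial (Rm m)) (Md (fN N) (1 : Rm m)) a) := by rw [hs]
  rw [Derivation.leibniz] at h1
  have h2 := congrArg (Phi N) h1
  simp only [map_add, smul_eq_mul, map_mul, hbase, Phi_algebraMap] at h2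
  have ha : Phi1 a = Phi N v * Phi1 ((s : Polynomial (Rm m))) := by
    rw [← Phi_algebraMap, ← Phi_algebraMap, ← map_mul, hs]
  rw [ha, hleib] at h2
  have hu : IsUnit (Phi1 ((s : Polynomial (Rm m)))) := by
    obtain ⟨n, hn⟩ := s.2
    rw [← hn, map_pow]
    exact (isUnit_PhiC N).pow n
  have h3 : Phi1 ((s : Polynomial (Rm m))) * Phi N (Dm v)
      = Phi1 ((s : Polynomial (Rm m))) * DL (Phi N v) := by
    exact add_left_cancel h2
  exact hu.mul_left_cancel h3

lemma deriv_eq_sum (d : Derivation ℂ (Rm m) (Rm m)) (r : Rm m) :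
    d r = ∑ i, MvPolynomial.pderiv i r * d (MvPolynomial.X i) := by
  induction r using MvPolynomial.induction_on with
  | C c =>
      rw [show MvPolynomial.C c = algebraMap ℂ (Rm m) c from rfl, Derivation.map_algebraMap]
      symm
      refine Finset.sum_eq_zero fun i _ => ?_
      rw [Derivation.map_algebraMap, zero_mul]
  | add p q hp hq =>
      rw [map_add, hp, hq, ← Finset.sum_add_distrib]
      refine Finset.sum_congr rfl fun i _ => ?_
      rw [map_add]
      ring
  | mul_X p i0 hp =>
      rw [Derivation.leibniz, smul_eq_mul, smul_eq_mul, hp]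
      have hterm : ∀ i : Fin m, MvPolynomial.pderiv i (p * MvPolynomial.X i0)
          * d (MvPolynomial.X i)
          = MvPolynomial.X i0 * (MvPolynomial.pderiv i p * d (MvPolynomial.X i))
            + p * (MvPolynomial.pderiv i (MvPolynomial.X i0) * d (MvPolynomial.X i)) := by
        intro i
        rw [Derivation.leibniz, smul_eq_mul, smul_eq_mul]
        ring
      rw [Finset.sum_congr rfl fun i _ => hterm i, Finset.sum_add_distrib,
        ← Finset.mul_sum, ← Finset.mul_sum]
      have hcol : ∑ i, MvPolynomial.pderiv i (MvPolynomial.X i0) * d (MvPolynomial.X i)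
          = d (MvPolynomial.X i0) := by
        rw [Finset.sum_eq_single i0]
        · rw [MvPolynomial.pderiv_X_self, one_mul]
        · intro i _ hne
          rw [MvPolynomial.pderiv_X, Pi.single_eq_of_ne (Ne.symm hne), zero_mul]
        · intro h
          exact absurd (Finset.mem_univ i0) h
      rw [hcol]
      ring

def DLd (d : Derivation ℂ (Rm m) (Rm m)) : L m → L m :=
  fun x => ∑ i, Phi0 (d (MvPolynomial.X i)) * D' i x

lemma DLd_add (d : Derivation ℂ (Rm m) (Rm m)) (x y : L m) :
    DLd d (x + y) = DLd d x + DLd d y := by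
  simp only [DLd]
  rw [← Finset.sum_add_distrib]
  refine Finset.sum_congr rfl fun i _ => ?_
  rw [map_add, mul_add]

lemma DLd_leibniz (d : Derivation ℂ (Rm m) (Rm m)) (x y : L m) :
    DLd d (x * y) = x * DLd d y + y * DLd d x := by
  simp only [DLd]
  rw [Finset.mul_sum, Finset.mul_sum, ← Finset.sum_add_distrib]
  refine Finset.sum_congr rfl fun i _ => ?_
  rw [D'_leibniz]
  ring

lemma D'_single_zero (i : Fin m) (p : Polynomial ℂ) :
    D' i (AddMonoidAlgebra.single (0 : G m) p) = 0 := by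
  rw [D'_single]
  have : (((0 : G m) i : ℤ) : Polynomial ℂ) = 0 := by
    norm_num
  rw [this, zero_mul]
  exact AddMonoidAlgebra.single_zero _

lemma castu_sub_single (i : Fin m) (u : Fin m →₀ ℕ) (hu : 1 ≤ u i) :
    castu (u - Finsupp.single i 1) = castu u - ei i := by
  funext j
  by_cases h : i = j
  · subst h
    simp only [castu, Finsupp.tsub_apply, Finsupp.single_eq_same, Pi.sub_apply, ei,
      Pi.single_eq_same]
    omega
  · simp only [castu, Finsupp.tsub_apply, Finsupp.single_eq_of_ne' h, Pi.sub_apply, ei,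
      Pi.single_eq_of_ne (fun hc => h hc.symm)]
    omega

lemma Phi0_pderiv (i : Fin m) (r : Rm m) :
    Phi0 (MvPolynomial.pderiv i r) = D' i (Phi0 r) := by
  induction r using MvPolynomial.induction_on' with
  | add p q hp hq => simp only [map_add, hp, hq]
  | monomial u c =>
      rw [MvPolynomial.pderiv_monomial, Phi0_monomial, Phi0_monomial, D'_single]
      by_cases h : u i = 0
      · have hz : (((castu u) i : ℤ) : Polynomial ℂ) = 0 := by
          rw [show (castu u) i = ((u i : ℕ) : ℤ) from rfl, h]
          norm_num
        rw [hz, zero_mul, h]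
        simp
      · have h1 : 1 ≤ u i := Nat.one_le_iff_ne_zero.mpr h
        rw [castu_sub_single i u h1]
        congr 1
        rw [Polynomial.C_mul, mul_comm,
          show (((castu u) i : ℤ) : Polynomial ℂ) = Polynomial.C ((u i : ℂ)) by simp [castu]]

lemma Phi1_monomial (n : ℕ) (r : Rm m) :
    Phi1 (Polynomial.monomial n r)
      = Phi0 r * AddMonoidAlgebra.single (0 : G m) (Polynomial.X ^ n) := by
  rw [Phi1, Polynomial.coe_eval₂RingHom, Polynomial.eval₂_monomial]
  congr 1
  rw [AddMonoidAlgebra.single_pow, smul_zero]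

lemma hbase_extD (d : Derivation ℂ (Rm m) (Rm m)) (a : Polynomial (Rm m)) :
    Phi N (extD (fN N) 1 d (algebraMap (Polynomial (Rm m)) (Md (fN N) (1 : Rm m)) a))
      = DLd d (Phi1 a) := by
  rw [extD_algebraMap', Phi_algebraMap]
  induction a using Polynomial.induction_on' with
  | add p q hp hq => simp only [map_add, hp, hq, DLd_add]
  | monomial n r =>
      rw [polyExt_monomial, Phi1_monomial, Phi1_monomial, DLd]
      have hstep : ∀ i : Fin m,
          Phi0 (d (MvPolynomial.X i)) *
            D' i (Phi0 r * AddMonoidAlgebra.single (0 : G m) (Polynomial.X ^ n))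
          = Phi0 (d (MvPolynomial.X i)) * D' i (Phi0 r)
              * AddMonoidAlgebra.single (0 : G m) (Polynomial.X ^ n) := by
        intro i
        rw [D'_leibniz, D'_single_zero, mul_zero, zero_add,
          mul_comm (AddMonoidAlgebra.single (0 : G m) (Polynomial.X ^ n)) (D' i (Phi0 r))]
        ring
      rw [Finset.sum_congr rfl fun i _ => hstep i, ← Finset.sum_mul]
      congr 1
      have : ∑ i, Phi0 (d (MvPolynomial.X i)) * D' i (Phi0 r) = Phi0 (d r) := by
        rw [deriv_eq_sum d r, map_sum]
        refine Finset.sum_congr rfl fun i _ => ?_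
        rw [map_mul, Phi0_pderiv]
        ring
      rw [this]

lemma Phi_extD (d : Derivation ℂ (Rm m) (Rm m)) (v : Md (fN N) (1 : Rm m)) :
    Phi N (extD (fN N) 1 d v) = DLd d (Phi N v) :=
  transfer N (extD (fN N) 1 d) (DLd d) (DLd_add d) (DLd_leibniz d) (hbase_extD N d) v

lemma Phi0_pderiv_fN (hN : ∀ i, 0 < N i) (i : Fin m) :
    Phi0 (MvPolynomial.pderiv i (fN N))
      = AddMonoidAlgebra.single (Nz N - ei i) ((N i : Polynomial ℂ)) := by
  rw [fN_eq_monomial, MvPolynomial.pderiv_monomial, one_mul, Phi0_monomial]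
  congr 1
  exact castu_sub_single i (faN N) (hN i)

lemma Phi_twist (hN : ∀ i, 0 < N i) (d : Derivation ℂ (Rm m) (Rm m))
    (v : Md (fN N) (1 : Rm m)) :
    Phi N (twist (fN N) 1 (0 : ℂ) d v)
      = ∑ i, Phi0 (d (MvPolynomial.X i)) * Top N i (Phi N v) := by
  rw [twist_apply_g1, map_add, Phi_extD]
  simp only [map_mul]
  rw [Phi_sElt, Phi_fInv, Phi_elt]
  have hdf : Phi0 (d (fN N)) = ∑ i,
      AddMonoidAlgebra.single (Nz N - ei i) ((N i : Polynomial ℂ))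
        * Phi0 (d (MvPolynomial.X i)) := by
    rw [deriv_eq_sum d (fN N), map_sum]
    exact Finset.sum_congr rfl fun i _ => by rw [map_mul, Phi0_pderiv_fN N hN]
  rw [hdf, DLd, Finset.mul_sum, Finset.sum_mul, Finset.sum_mul, ← Finset.sum_add_distrib]
  refine Finset.sum_congr rfl fun i _ => ?_
  have hsingles : AddMonoidAlgebra.single (0 : G m) Polynomial.X *
        AddMonoidAlgebra.single (Nz N - ei i) ((N i : Polynomial ℂ)) *
        AddMonoidAlgebra.single (-(Nz N)) (1 : Polynomial ℂ)
      = AddMonoidAlgebra.single (-(ei i)) ((N i : Polynomial ℂ) * Polynomial.X) := by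
    rw [AddMonoidAlgebra.single_mul_single, AddMonoidAlgebra.single_mul_single]
    congr 1
    · abel
    · ring
  rw [Top, mul_add]
  refine congrArg (fun x : L m => _ + x) ?_
  calc AddMonoidAlgebra.single (0 : G m) Polynomial.X *
        (AddMonoidAlgebra.single (Nz N - ei i) ((N i : Polynomial ℂ))
          * Phi0 (d (MvPolynomial.X i))) *
        AddMonoidAlgebra.single (-(Nz N)) 1 * Phi N v
      = (AddMonoidAlgebra.single (0 : G m) Polynomial.X *
          AddMonoidAlgebra.single (Nz N - ei i) ((N i : Polynomial ℂ)) *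
          AddMonoidAlgebra.single (-(Nz N)) 1) *
          (Phi0 (d (MvPolynomial.X i)) * Phi N v) := by ring
    _ = Phi0 (d (MvPolynomial.X i)) *
          (AddMonoidAlgebra.single (-(ei i)) ((N i : Polynomial ℂ) * Polynomial.X)
            * Phi N v) := by rw [hsingles]; ring

lemma single_zero_support_nonneg (p : Polynomial ℂ) :
    ∀ b ∈ (AddMonoidAlgebra.single (0 : G m) p).coeff.support, (0 : G m) ≤ b := by
  intro b hb
  have := Finsupp.support_single_subset hb
  rw [Finset.mem_singleton] at this
  exact le_of_eq this.symm

lemma Dops_InM (hN : ∀ i, 0 < N i) {δ : Module.End ℂ (Md (fN N) (1 : Rm m))}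
    (hδ : δ ∈ Dops (fN N) 1 (0 : ℂ)) :
    ∀ (w : G m) (v : Md (fN N) (1 : Rm m)),
      InM N w (Phi N v) → InM N w (Phi N (δ v)) := by
  induction hδ using Algebra.adjoin_induction with
  | mem x hx =>
      rcases hx with (⟨r, rfl⟩ | hx) | ⟨d, rfl⟩
      · intro w v hv
        rw [mulOp_apply, map_mul, Phi_elt]
        exact InM_mul_nonneg N _ _ (Phi0_support_nonneg r) hv
      · rw [Set.mem_singleton_iff] at hx
        subst hx
        intro w v hv
        rw [mulOp_apply, map_mul, Phi_sElt]
        exact InM_mul_nonneg N _ _ (single_zero_support_nonneg _) hv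
      · intro w v hv
        rw [Phi_twist N hN d v]
        refine InM_sum N _ _ fun i _ => ?_
        exact InM_mul_nonneg N _ _ (Phi0_support_nonneg _) (Top_InM N i _ hv)
  | algebraMap c =>
      intro w v hv
      rw [Module.algebraMap_end_apply, Algebra.smul_def, map_mul, Phi_algebraMapC]
      exact InM_mul_nonneg N _ _ (single_zero_support_nonneg _) hv
  | add x y hx hy hPx hPy =>
      intro w v hv
      rw [LinearMap.add_apply, map_add]
      exact InM_add N (hPx w v hv) (hPy w v hv)
  | mul x y hx hy hPx hPy =>
      intro w v hv
      rw [Module.End.mul_apply]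
      exact hPx w _ (hPy w v hv)

lemma Dax_cast_zero (n : ℕ) :
    Dax n (n : ℤ) 0 = ∏ j ∈ Finset.range n,
      (Polynomial.C (((j + 1 : ℕ) : ℂ)) + (n : Polynomial ℂ) * Polynomial.X) := by
  have hmap : Finset.Ioc (0 : ℤ) (n : ℤ)
      = (Finset.range n).map ⟨fun j : ℕ => (j : ℤ) + 1, fun a b h => by
        have h' : (a : ℤ) + 1 = (b : ℤ) + 1 := h
        omega⟩ := by
    ext z
    simp only [Finset.mem_Ioc, Finset.mem_map, Finset.mem_range, Function.Embedding.coeFn_mk]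
    show (0 < z ∧ z ≤ n) ↔ ∃ a, a < n ∧ (a : ℤ) + 1 = z
    constructor
    · intro hz
      exact ⟨(z - 1).toNat, by omega, by omega⟩
    · rintro ⟨j, hj, rfl⟩
      omega
  rw [Dax, hmap, Finset.prod_map]
  refine Finset.prod_congr rfl fun j hj => ?_
  show _ = Polynomial.C (((j + 1 : ℕ) : ℂ)) + (n : Polynomial ℂ) * Polynomial.X
  congr 2 <;> push_cast <;> ring

lemma Dv_Nz_zero (hN : ∀ i, 0 < N i) :
    Dv N (Nz N) (0 : G m) = Polynomial.C (cN N) * Bpoly N := by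
  rw [Dv]
  have hstep : ∀ i : Fin m, Dax (N i) (Nz N i) ((0 : G m) i)
      = Polynomial.C ((N i : ℂ) ^ (N i)) *
          ∏ j ∈ Finset.range (N i),
            (Polynomial.X + Polynomial.C (((j : ℂ) + 1) / (N i : ℂ))) := by
    intro i
    rw [show Nz N i = ((N i : ℕ) : ℤ) from rfl, show (0 : G m) i = (0 : ℤ) from rfl,
      Dax_cast_zero, range_prod_eq N hN i]
  rw [Finset.prod_congr rfl fun i _ => hstep i, Finset.prod_mul_distrib, Bpoly, cN, ← map_prod]

lemma Phi1_map (q : Polynomial ℂ) :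
    Phi1 (q.map (algebraMap ℂ (Rm m))) = AddMonoidAlgebra.single (0 : G m) q := by
  induction q using Polynomial.induction_on' with
  | add p q hp hq =>
      rw [Polynomial.map_add, map_add, hp, hq]
      exact (AddMonoidAlgebra.single_add 0 p q).symm
  | monomial n c =>
      rw [Polynomial.map_monomial, Phi1_monomial,
        show algebraMap ℂ (Rm m) c = MvPolynomial.C c from rfl,
        ← MvPolynomial.monomial_zero', Phi0_monomial,
        show castu (0 : Fin m →₀ ℕ) = (0 : G m) from rfl,
        AddMonoidAlgebra.single_mul_single, add_zero, Polynomial.C_mul_X_pow_eq_monomial]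

lemma minimality (hN : ∀ i, 0 < N i) (b' : Polynomial ℂ) (hb' : b' ≠ 0)
    (hfe : FunEq (fN N) (1 : Rm m) (0 : ℂ) b') : (Bpoly N).degree ≤ b'.degree := by
  obtain ⟨δ, hδ, heq⟩ := hfe
  have h1 : InM N (Nz N) (Phi N (elt (fN N) 1 (fN N))) := by
    rw [Phi_elt, Phi0_fN]
    intro w'
    by_cases h : Nz N = w'
    · subst h
      rw [AddMonoidAlgebra.coeff_single, Finsupp.single_eq_same]
      have hone : Dv N (Nz N) (Nz N) = 1 := by
        rw [Dv]
        refine Finset.prod_eq_one fun i _ => ?_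
        rw [Dax, Finset.Ioc_self, Finset.prod_empty]
      rw [hone]
    · rw [AddMonoidAlgebra.coeff_single, Finsupp.single_eq_of_ne' h]
      exact dvd_zero _
  have h2 := Dops_InM N hN hδ (Nz N) _ h1
  rw [heq, aeval_sElt_eq_U] at h2
  have hU : Phi N (U N b' 0) = AddMonoidAlgebra.single (0 : G m) b' := by
    rw [U, Phi_algebraMap, MvPolynomial.monomial_zero', map_one, Polynomial.C_1, mul_one,
      Phi1_map]
  rw [hU] at h2
  have h3 := h2 0
  rw [AddMonoidAlgebra.coeff_single, Finsupp.single_eq_same, Dv_Nz_zero N hN] at h3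
  exact Polynomial.degree_le_of_dvd ((dvd_mul_left _ _).trans h3) hb'

lemma Bpoly_monic : (Bpoly N).Monic :=
  Polynomial.monic_prod_of_monic _ _ fun i _ =>
    Polynomial.monic_prod_of_monic _ _ fun j _ => Polynomial.monic_X_add_C _

lemma Bpoly_roots (hN : ∀ i, 0 < N i) :
    ∀ z ∈ (Bpoly N).roots, (∃ q : ℚ, q < 0 ∧ z = (q : ℂ)) ∧
      ∃ (i : Fin m) (ℓ : ℕ), z = -(((0 : ℕ) + 1 + ℓ : ℂ) / (N i : ℂ)) := by
  intro z hz
  have hroot : (Bpoly N).IsRoot z := Polynomial.isRoot_of_mem_roots hz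
  rw [Polynomial.IsRoot, Bpoly, Polynomial.eval_prod] at hroot
  obtain ⟨i, -, hi⟩ := Finset.prod_eq_zero_iff.mp hroot
  rw [Polynomial.eval_prod] at hi
  obtain ⟨j, -, hij⟩ := Finset.prod_eq_zero_iff.mp hi
  rw [Polynomial.eval_add, Polynomial.eval_X, Polynomial.eval_C] at hij
  have hz' : z = -(((j : ℂ) + 1) / (N i : ℂ)) := by
    have := eq_neg_of_add_eq_zero_left hij
    exact this
  constructor
  · refine ⟨-(((j : ℚ) + 1) / (N i : ℚ)), ?_, ?_⟩
    · have hpos : 0 < ((j : ℚ) + 1) / (N i : ℚ) := by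
        apply div_pos
        · positivity
        · exact_mod_cast hN i
      linarith
    · rw [hz']
      push_cast
      ring
  · refine ⟨i, j, ?_⟩
    rw [hz']
    push_cast
    ring

end Minimality






end BSMono

end BSMonoAux


/-- **Bernstein–Sato polynomial of a monomial (the local model in Kashiwara's proof).**
For positive integers `N₁,…,N_m`, the Bernstein–Sato polynomial of `z₁^{N₁}⋯z_m^{N_m}`
equals `∏_{i=1}^m ∏_{j=1}^{N_i} (s + j/N_i)`; all its roots are negative rational numbers
of the form `-(k_i + 1 + ℓ)/N_i` with `k_i = 0` and `ℓ ≥ 0`. -/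
theorem bernstein_sato_monomial
    (m : ℕ) (N : Fin m → ℕ) (hN : ∀ i, 0 < N i)
    (f : MvPolynomial (Fin m) ℂ) (hfdef : f = ∏ i : Fin m, MvPolynomial.X i ^ N i)
    (B : Polynomial ℂ)
    (hBdef : B = ∏ i : Fin m, ∏ j ∈ Finset.range (N i),
        (Polynomial.X + Polynomial.C (((j : ℂ) + 1) / (N i : ℂ)))) :
    IsBernsteinSato f (1 : MvPolynomial (Fin m) ℂ) (0 : ℂ) B ∧
      ∀ z ∈ B.roots, (∃ q : ℚ, q < 0 ∧ z = (q : ℂ)) ∧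
        ∃ (i : Fin m) (ℓ : ℕ), z = -(((0 : ℕ) + 1 + ℓ : ℂ) / (N i : ℂ)) := by
  subst hfdef
  subst hBdef
  exact ⟨⟨BSMono.Bpoly_monic N, BSMono.funEq_main N hN, BSMono.minimality N hN⟩,
    BSMono.Bpoly_roots N hN⟩
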